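/- arXiv:math/0306316 — 4 statements merged into one kernel-verified Lean document; each statement's English description precedes it below -/
import Mathlib

section
/- Let R be a complete local ring with maximal ideal m and A a commutative R-algebra. If e, f ∈ A satisfy e² − e ∈ mᵏA, f² − f ∈ mᵏA, ef ∈ mᵏA, and (ef)², e²(f²−f), f(e²−e) ∈ m^{2k}A, then for e' = e + (e²−e)(1−2e)⁻¹ and f' = f + (f²−f)(1−2f)⁻¹ one has e'·f' ∈ m^{2k}A. -/
private lemma mul_mem_ideal_smul_top {R A : Type*} [CommRing R] [CommRing A] [Algebra R A]
    (I : Ideal R) (c x : A) (hx : x ∈ I • (⊤ : Submodule R A)) :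
    c * x ∈ I • (⊤ : Submodule R A) := by
  refine Submodule.smul_induction_on hx (fun r hr a _ => ?_) (fun y z hy hz => ?_)
  · rw [mul_smul_comm]
    exact Submodule.smul_mem_smul hr trivial
  · rw [mul_add]; exact add_mem hy hz

/-- **Newton iteration preserves approximate orthogonality.**
Let `R` be a complete local ring with maximal ideal `m` and `A` a commutative
`R`-algebra. Suppose `e, f ∈ A` satisfy `e² - e, f² - f, e·f ∈ mᵏA`, and moreover
`(ef)², e²(f²−f), f(e²−e) ∈ m^{2k}A`.  Then for the Newton refinements
`e' = e + (e²−e)(1−2e)⁻¹` and `f' = f + (f²−f)(1−2f)⁻¹` one has `e'·f' ∈ m^{2k}A`. -/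
theorem approx_orthogonal_refine
    {R A : Type*} [CommRing R] [IsLocalRing R]
    [IsAdicComplete (IsLocalRing.maximalIdeal R) R]
    [CommRing A] [Algebra R A]
    (k : ℕ) (hk : 1 ≤ k)
    (e f ue uf : A)
    (hue : (1 - 2 * e) * ue = 1) (huf : (1 - 2 * f) * uf = 1)
    (he : e * e - e ∈ ((IsLocalRing.maximalIdeal R) ^ k) • (⊤ : Submodule R A))
    (hf : f * f - f ∈ ((IsLocalRing.maximalIdeal R) ^ k) • (⊤ : Submodule R A))
    (hef : e * f ∈ ((IsLocalRing.maximalIdeal R) ^ k) • (⊤ : Submodule R A))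
    (h1 : (e * f) * (e * f) ∈ ((IsLocalRing.maximalIdeal R) ^ (2 * k)) • (⊤ : Submodule R A))
    (h2 : e * e * (f * f - f) ∈ ((IsLocalRing.maximalIdeal R) ^ (2 * k)) • (⊤ : Submodule R A))
    (h3 : f * (e * e - e) ∈ ((IsLocalRing.maximalIdeal R) ^ (2 * k)) • (⊤ : Submodule R A)) :
    (e + (e * e - e) * ue) * (f + (f * f - f) * uf) ∈
      ((IsLocalRing.maximalIdeal R) ^ (2 * k)) • (⊤ : Submodule R A) := by
  have key : (e + (e * e - e) * ue) * (f + (f * f - f) * uf)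
      = (ue * uf) * ((e * f) * (e * f)) := by
    have he' : e + (e * e - e) * ue = -(e * e) * ue := by linear_combination (-e) * hue
    have hf' : f + (f * f - f) * uf = -(f * f) * uf := by linear_combination (-f) * huf
    rw [he', hf']; ring
  rw [key]
  exact mul_mem_ideal_smul_top _ _ _ h1
end

section
/- Let R be a complete local ring with maximal ideal m, and let A be a commutative R-algebra that is free of finite rank as an R-module. If there exist elements e₁,…,eₙ ∈ A whose images form an orthogonal idempotent basis of A/mA (i.e., eᵢ² − eᵢ ∈ mA and eᵢeⱼ ∈ mA for i ≠ j, and the images form an R/m-basis), then there exist elements ẽ₁,…,ẽₙ ∈ A forming an R-basis of A with ẽᵢ² = ẽᵢ and ẽᵢẽⱼ = 0 for i ≠ j. -/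
/-!
Since `A` is finite free over the `𝔪`-adically complete ring `R`, it is complete for the ideal
`𝔪A`, hence Henselian at `𝔪A`. Each `eᵢ` is a simple root of `X² - X` modulo `𝔪A` (the derivative
`2eᵢ - 1` squares to `1 + 4(eᵢ² - eᵢ)`), so it lifts to an idempotent `ẽᵢ`. The products `ẽᵢẽⱼ`,
`i ≠ j`, are idempotents in `𝔪A ⊆ Jac(A)`, hence zero. Finally, by Nakayama the `ẽᵢ` span `A`,
and a spanning family of `rank A` elements of a free module is a basis.
-/

open Submodule IsLocalRing

namespace Module.Basis

variable {R M ι : Type*} [CommRing R] [AddCommGroup M] [Module R M] (b : Basis ι R M)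
  (I : Ideal R)

theorem mem_ideal_smul_top_iff {x : M} :
    x ∈ I • (⊤ : Submodule R M) ↔ ∀ i, b.repr x i ∈ I := by
  refine ⟨fun hx => ?_, fun h => ?_⟩
  · refine smul_induction_on hx (fun r hr y _ i => ?_) fun y z hy hz i => ?_
    · simpa using I.mul_mem_right _ hr
    · simpa using I.add_mem (hy i) (hz i)
  · rw [← b.linearCombination_repr x, Finsupp.linearCombination_apply]
    exact sum_mem fun i _ => smul_mem_smul (h i) mem_top

theorem smodEq_ideal_smul_top_iff {x y : M} :
    x ≡ y [SMOD I • (⊤ : Submodule R M)] ↔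
      ∀ i, b.repr x i ≡ b.repr y i [SMOD I • (⊤ : Submodule R R)] := by
  simp only [SModEq.sub_mem, b.mem_ideal_smul_top_iff, smul_eq_mul, Ideal.mul_top, map_sub,
    Finsupp.sub_apply]

end Module.Basis

section AdicCompleteness

variable {R M ι : Type*} [CommRing R] [AddCommGroup M] [Module R M] {I : Ideal R}

theorem IsHausdorff.of_basis [IsHausdorff I R] (b : Module.Basis ι R M) : IsHausdorff I M :=
  ⟨fun x hx => b.repr.injective <| Finsupp.ext fun i => by
    simpa using IsHausdorff.haus ‹_› (b.repr x i) fun n =>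
      by simpa using (b.smodEq_ideal_smul_top_iff _).1 (hx n) i⟩

theorem IsPrecomplete.of_basis [IsPrecomplete I R] [Finite ι] (b : Module.Basis ι R M) :
    IsPrecomplete I M := by
  refine ⟨fun f hf => ?_⟩
  cases nonempty_fintype ι
  choose L hL using fun i => IsPrecomplete.prec ‹IsPrecomplete I R›
    (f := fun n => b.repr (f n) i) fun hmn => (b.smodEq_ideal_smul_top_iff _).1 (hf hmn) i
  refine ⟨∑ i, L i • b i, fun n => (b.smodEq_ideal_smul_top_iff _).2 fun i => ?_⟩
  rw [b.repr_sum_self]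
  exact hL i n

end AdicCompleteness

theorem IsIdempotentElem.eq_zero_of_mem_jacobson_bot {A : Type*} [CommRing A] {e : A}
    (he : IsIdempotentElem e) (hJ : e ∈ (⊥ : Ideal A).jacobson) : e = 0 := by
  have hunit : IsUnit (1 - e) := by
    simpa [sub_eq_neg_add] using Ideal.mem_jacobson_bot.1 hJ (-1)
  exact hunit.mul_left_eq_zero.1 (by rw [mul_sub, mul_one, he.eq, sub_self])

namespace HenselianRing

open Polynomial

variable {A : Type*} [CommRing A] (J : Ideal A) [HenselianRing A J]

theorem exists_isIdempotentElem_sub_mem {e : A} (he : e * e - e ∈ J) :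
    ∃ f, IsIdempotentElem f ∧ f - e ∈ J := by
  have hmonic : (X ^ 2 - X : A[X]).Monic := by monicity!
  have hunit : IsUnit (Ideal.Quotient.mk J ((derivative (X ^ 2 - X : A[X])).eval e)) := by
    refine IsUnit.of_mul_eq_one (Ideal.Quotient.mk J (2 * e - 1)) ?_
    rw [← map_mul, ← map_one (Ideal.Quotient.mk J), Ideal.Quotient.eq]
    have : (derivative (X ^ 2 - X : A[X])).eval e * (2 * e - 1) - 1 = 4 * (e * e - e) := by
      simp only [derivative_sub, derivative_X_pow_succ, Nat.cast_one, map_add, map_one, pow_one,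
        derivative_X, eval_sub, eval_mul, eval_add, eval_one, eval_X]
      ring
    rw [this]
    exact J.mul_mem_left 4 he
  obtain ⟨f, hroot, hf⟩ := HenselianRing.is_henselian (I := J) _ hmonic e
    (by simpa [sq] using he) hunit
  exact ⟨f, by simpa [IsIdempotentElem, sq, sub_eq_zero] using hroot.eq_zero, hf⟩

theorem exists_orthogonalIdempotents_sub_mem {ι : Type*} {e : ι → A}
    (hidem : ∀ i, e i * e i - e i ∈ J) (horth : Pairwise fun i j => e i * e j ∈ J) :
    ∃ f : ι → A, OrthogonalIdempotents f ∧ ∀ i, f i - e i ∈ J := by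
  choose f hidem' hf using fun i => exists_isIdempotentElem_sub_mem J (hidem i)
  refine ⟨f, ⟨hidem', fun i j hij => ((hidem' i).mul (hidem' j)).eq_zero_of_mem_jacobson_bot
    (HenselianRing.jac (I := J) ?_)⟩, hf⟩
  have : f i * f j = (f i - e i) * f j + e i * (f j - e j) + e i * e j := by ring
  rw [this]
  exact J.add_mem (J.add_mem (J.mul_mem_right _ (hf i)) (J.mul_mem_left _ (hf j))) (horth hij)

end HenselianRing

namespace IsLocalRing

variable {R M : Type*} [CommRing R] [IsLocalRing R] [AddCommGroup M] [Module R M]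
  [Module.Free R M]

theorem finrank_quotient_smul_top :
    Module.finrank (R ⧸ maximalIdeal R) (M ⧸ maximalIdeal R • (⊤ : Submodule R M)) =
      Module.finrank R M :=
  ((TensorProduct.quotTensorEquivQuotSMul M _).extendScalarsOfSurjective
    Ideal.Quotient.mk_surjective).finrank_eq.symm.trans Module.finrank_baseChange

theorem exists_basis_of_mk_eq_basis [Module.Finite R M] {ι : Type*} [Fintype ι] (v : ι → M)
    (bq : Module.Basis ι (R ⧸ maximalIdeal R) (M ⧸ maximalIdeal R • (⊤ : Submodule R M)))
    (hv : ∀ i, Submodule.Quotient.mk (v i) = bq i) :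
    ∃ b : Module.Basis ι R M, ⇑b = v := by
  have hspan : span R (Set.range v) = ⊤ := by
    rw [← map_mkQ_eq_top, map_span, ← Set.range_comp, show mkQ _ ∘ v = bq from funext hv,
      ← restrictScalars_span R (R ⧸ maximalIdeal R) Ideal.Quotient.mk_surjective, bq.span_eq,
      restrictScalars_top]
  have hcard : Fintype.card ι = Module.finrank R M := by
    rw [← finrank_quotient_smul_top, Module.finrank_eq_card_basis bq]
  exact ⟨.mk (linearIndependent_of_top_le_span_of_card_eq_finrank hspan.ge hcard) hspan.ge,
    Module.Basis.coe_mk _ _⟩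

end IsLocalRing

theorem idempotent_basis_lift_general
    {R A : Type*} [CommRing R] [IsLocalRing R]
    [IsAdicComplete (IsLocalRing.maximalIdeal R) R]
    [CommRing A] [Algebra R A] [Module.Free R A] [Module.Finite R A]
    {n : ℕ} (e : Fin n → A)
    (hid : ∀ i, e i * e i - e i ∈ (IsLocalRing.maximalIdeal R) • (⊤ : Submodule R A))
    (horth : ∀ i j, i ≠ j → e i * e j ∈ (IsLocalRing.maximalIdeal R) • (⊤ : Submodule R A))
    (hbasis : ∃ bq : Module.Basis (Fin n) (R ⧸ IsLocalRing.maximalIdeal R)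
        (A ⧸ ((IsLocalRing.maximalIdeal R) • (⊤ : Submodule R A))),
      ∀ i, bq i = Submodule.Quotient.mk (e i)) :
    ∃ et : Fin n → A,
      (∃ bA : Module.Basis (Fin n) R A, ∀ i, bA i = et i) ∧
      (∀ i, et i * et i = et i) ∧
      (∀ i j, i ≠ j → et i * et j = 0) := by
  obtain ⟨bq, hbq⟩ := hbasis
  set J := (maximalIdeal R).map (algebraMap R A)
  have hJ : ∀ x, x ∈ maximalIdeal R • (⊤ : Submodule R A) ↔ x ∈ J := fun x => by
    rw [Ideal.smul_top_eq_map, restrictScalars_mem]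
  let b := Module.Free.chooseBasis R A
  have : IsHausdorff J A := IsHausdorff.map_algebraMap_iff.2 (.of_basis b)
  have : IsPrecomplete J A := IsPrecomplete.map_algebraMap_iff.2 (.of_basis b)
  have : IsAdicComplete J A := {}
  obtain ⟨et, het, het_sub⟩ := HenselianRing.exists_orthogonalIdempotents_sub_mem J
    (fun i => (hJ _).1 (hid i)) fun i j hij => (hJ _).1 (horth i j hij)
  obtain ⟨bA, hbA⟩ := exists_basis_of_mk_eq_basis et bq fun i =>
    ((Submodule.Quotient.eq _).2 ((hJ _).2 (het_sub i))).trans (hbq i).symm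
  exact ⟨et, ⟨bA, congrFun hbA⟩, fun i => (het.idem i).eq, fun i j hij => het.ortho hij⟩

/-- **Idempotent lifting over a complete local ring.**
Let `R` be a complete local (Noetherian) ring with maximal ideal `m`, and `A` a
commutative `R`-algebra, free of finite rank as an `R`-module.  If `e₁, …, eₙ ∈ A`
have images forming an orthogonal idempotent basis of `A/mA` over `R/m`, then there
exist `ẽ₁, …, ẽₙ ∈ A` forming an `R`-basis of `A` with `ẽᵢ² = ẽᵢ` and `ẽᵢẽⱼ = 0`
for `i ≠ j`. -/
theorem idempotent_basis_lift
    {R A : Type*} [CommRing R] [IsLocalRing R] [IsNoetherianRing R]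
    [IsAdicComplete (IsLocalRing.maximalIdeal R) R]
    [CommRing A] [Algebra R A] [Module.Free R A] [Module.Finite R A]
    {n : ℕ} (e : Fin n → A)
    (hid : ∀ i, e i * e i - e i ∈ (IsLocalRing.maximalIdeal R) • (⊤ : Submodule R A))
    (horth : ∀ i j, i ≠ j → e i * e j ∈ (IsLocalRing.maximalIdeal R) • (⊤ : Submodule R A))
    (hbasis : ∃ bq : Module.Basis (Fin n) (R ⧸ IsLocalRing.maximalIdeal R)
        (A ⧸ ((IsLocalRing.maximalIdeal R) • (⊤ : Submodule R A))),
      ∀ i, bq i = Submodule.Quotient.mk (e i)) :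
    ∃ et : Fin n → A,
      (∃ bA : Module.Basis (Fin n) R A, ∀ i, bA i = et i) ∧
      (∀ i, et i * et i = et i) ∧
      (∀ i j, i ≠ j → et i * et j = 0) :=
  idempotent_basis_lift_general e hid horth hbasis
end

section
/- Let A be a semisimple Frobenius algebra over a commutative ring R, isomorphic to R_{λ₁} ⊕ ⋯ ⊕ R_{λₙ}. Then for every integer g ≥ 0, the invariant of the closed genus-g surface in the associated TQFT equals Σᵢ λᵢ^{g−1}. Equivalently, μ(H^g(1)) = Σᵢ λᵢ^{g−1}, where H : A → A is the genus-adding operator H(a) = m(Δ(a)). -/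
open TensorProduct

/-! The Frobenius relation reads `Δ(ab) = (a ⊗ 1)·Δ(b)`. Since `eᵢ A = R eᵢ`, applying it to
`eᵢ = eᵢ²` forces `Δ(eᵢ) = eᵢ ⊗ y`, and the counit law gives `y = λᵢ eᵢ`. Hence `H(eᵢ) = λᵢ eᵢ`,
and since `1 = ∑ eᵢ`, `H^g(1) = ∑ λᵢ^g eᵢ`, whose counit is `∑ λᵢ^(g-1)`. -/

namespace Module.Basis

variable {R A ι : Type*} [CommSemiring R] [Semiring A] [Algebra R A] (b : Basis ι R A)

theorem mul_eq_coord_smul_of_orthogonal_idempotent (hid : ∀ i, b i * b i = b i)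
    (horth : ∀ i j, i ≠ j → b i * b j = 0) (i : ι) (a : A) :
    b i * a = b.coord i a • b i := by
  suffices LinearMap.mulLeft R (b i) = (b.coord i).smulRight (b i) from
    LinearMap.congr_fun this a
  refine b.ext fun j => ?_
  rcases eq_or_ne i j with rfl | hij
  · simp [hid]
  · simp [horth i j hij, Finsupp.single_eq_of_ne hij]

theorem sum_eq_one_of_orthogonal_idempotent [Fintype ι] (hid : ∀ i, b i * b i = b i)
    (horth : ∀ i j, i ≠ j → b i * b j = 0) : ∑ i, b i = 1 := by
  have hcoord (i : ι) : b.coord i 1 = 1 := by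
    simpa using congrArg (b.coord i)
      (b.mul_eq_coord_smul_of_orthogonal_idempotent hid horth i 1) |>.symm
  conv_rhs => rw [← b.sum_repr 1]
  simp_all

theorem tmul_one_mul_eq_tmul_of_orthogonal_idempotent (hid : ∀ i, b i * b i = b i)
    (horth : ∀ i j, i ≠ j → b i * b j = 0) (i : ι) (x : A ⊗[R] A) :
    (b i ⊗ₜ[R] (1 : A)) * x = b i ⊗ₜ[R] TensorProduct.lid R A ((b.coord i).rTensor A x) := by
  induction x using TensorProduct.induction_on with
  | zero => simp
  | tmul u v =>
    simp [b.mul_eq_coord_smul_of_orthogonal_idempotent hid horth, smul_tmul]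
  | add x y hx hy => simp [mul_add, hx, hy, tmul_add]

end Module.Basis

theorem TensorProduct.map_mul'_id_assoc_symm_tmul {R A : Type*} [CommSemiring R] [Semiring A]
    [Algebra R A] (a : A) (x : A ⊗[R] A) :
    map (LinearMap.mul' R A) LinearMap.id ((TensorProduct.assoc R A A A).symm (a ⊗ₜ x)) =
      (a ⊗ₜ[R] (1 : A)) * x := by
  induction x using TensorProduct.induction_on with
  | zero => simp
  | tmul u v => simp
  | add x y hx hy => simp_all [tmul_add, mul_add]

theorem comul_basis_eq_smul_tmul {R A ι : Type*} [CommSemiring R] [Semiring A] [Algebra R A]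
    (Δ : A →ₗ[R] A ⊗[R] A) (μ : A →ₗ[R] R)
    (hcounitL : ∀ a : A, TensorProduct.lid R A (map μ LinearMap.id (Δ a)) = a)
    (hfrob : ∀ a b : A, Δ (a * b) = map (LinearMap.mul' R A) LinearMap.id
      ((TensorProduct.assoc R A A A).symm (a ⊗ₜ[R] Δ b)))
    (b : Module.Basis ι R A) (hid : ∀ i, b i * b i = b i)
    (horth : ∀ i j, i ≠ j → b i * b j = 0) (i : ι) (u : Rˣ) (hμ : μ (b i) = ↑u⁻¹) :
    Δ (b i) = (u : R) • (b i ⊗ₜ[R] b i) := by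
  set y := TensorProduct.lid R A ((b.coord i).rTensor A (Δ (b i)))
  have hΔ : Δ (b i) = b i ⊗ₜ y := calc
    Δ (b i) = Δ (b i * b i) := by rw [hid]
    _ = (b i ⊗ₜ[R] (1 : A)) * Δ (b i) := by rw [hfrob, map_mul'_id_assoc_symm_tmul]
    _ = b i ⊗ₜ y := b.tmul_one_mul_eq_tmul_of_orthogonal_idempotent hid horth i _
  have hy : y = (u : R) • b i := by
    have := hcounitL (b i)
    rw [hΔ, map_tmul, lid_tmul, LinearMap.id_apply, hμ] at this
    rw [← this, smul_smul, Units.mul_inv, one_smul]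
  rw [hΔ, hy, tmul_smul]

theorem LinearMap.iterate_sum_of_apply_eq_smul {R M ι : Type*} [CommSemiring R] [AddCommMonoid M]
    [Module R M] [Fintype ι] (f : M →ₗ[R] M) (v : ι → M) (c : ι → R)
    (h : ∀ i, f (v i) = c i • v i) (g : ℕ) : f^[g] (∑ i, v i) = ∑ i, c i ^ g • v i := by
  induction g with
  | zero => simp
  | succ g ih =>
    rw [Function.iterate_succ_apply', ih, map_sum]
    simp [h, smul_smul, pow_succ, mul_comm]

theorem closed_invariant_semisimple_general
    {R A : Type*} [CommRing R] [CommRing A] [Algebra R A]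
    (Δ : A →ₗ[R] A ⊗[R] A) (μ : A →ₗ[R] R)
    (hcounitL : ∀ a : A, (TensorProduct.lid R A) (TensorProduct.map μ LinearMap.id (Δ a)) = a)
    (hfrob : ∀ a b : A, Δ (a * b) = TensorProduct.map (LinearMap.mul' R A) LinearMap.id
      ((TensorProduct.assoc R A A A).symm (a ⊗ₜ[R] Δ b)))
    {n : ℕ} (e : Fin n → A) (b : Module.Basis (Fin n) R A) (hb : ∀ i, b i = e i)
    (hid : ∀ i, e i * e i = e i)
    (horth : ∀ i j, i ≠ j → e i * e j = 0)
    (lam : Fin n → Rˣ) (hμ : ∀ i, μ (e i) = ((lam i)⁻¹ : Rˣ))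
    (g : ℕ) :
    μ ((fun a => LinearMap.mul' R A (Δ a))^[g] 1) =
      ∑ i, ((lam i ^ ((g : ℤ) - 1) : Rˣ) : R) := by
  obtain rfl : ⇑b = e := funext hb
  have handle_basis (i : Fin n) : (LinearMap.mul' R A ∘ₗ Δ) (b i) = (lam i : R) • b i := by
    simp [comul_basis_eq_smul_tmul Δ μ hcounitL hfrob b hid horth i (lam i) (hμ i), hid]
  change μ ((LinearMap.mul' R A ∘ₗ Δ)^[g] 1) = _
  rw [← b.sum_eq_one_of_orthogonal_idempotent hid horth,
    LinearMap.iterate_sum_of_apply_eq_smul _ _ _ handle_basis, map_sum]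
  refine Finset.sum_congr rfl fun i _ => ?_
  rw [map_smul, hμ, smul_eq_mul, zpow_sub_one, zpow_natCast, Units.val_mul,
    Units.val_pow_eq_pow_val]

/-- **Closed surface invariants of a semisimple Frobenius algebra.**
Let `A` be a commutative Frobenius algebra over `R` (counit `μ`, comultiplication `Δ`)
with an orthogonal idempotent basis `e₁,…,eₙ` satisfying `μ(eᵢ) = λᵢ⁻¹` for units
`λᵢ ∈ R`.  Then the genus-`g` closed surface invariant, `μ(H^g(1))` where
`H = m ∘ Δ` is the handle operator, equals `∑ᵢ λᵢ^{g−1}`. -/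
theorem closed_invariant_semisimple
    {R A : Type*} [CommRing R] [CommRing A] [Algebra R A]
    (Δ : A →ₗ[R] A ⊗[R] A) (μ : A →ₗ[R] R)
    (hcounitR : ∀ a : A, (TensorProduct.rid R A) (TensorProduct.map LinearMap.id μ (Δ a)) = a)
    (hcounitL : ∀ a : A, (TensorProduct.lid R A) (TensorProduct.map μ LinearMap.id (Δ a)) = a)
    (hfrob : ∀ a b : A, Δ (a * b) = TensorProduct.map (LinearMap.mul' R A) LinearMap.id
      ((TensorProduct.assoc R A A A).symm (a ⊗ₜ[R] Δ b)))
    {n : ℕ} (e : Fin n → A) (b : Module.Basis (Fin n) R A) (hb : ∀ i, b i = e i)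
    (hid : ∀ i, e i * e i = e i)
    (horth : ∀ i j, i ≠ j → e i * e j = 0)
    (lam : Fin n → Rˣ) (hμ : ∀ i, μ (e i) = ((lam i)⁻¹ : Rˣ))
    (g : ℕ) :
    μ ((fun a => LinearMap.mul' R A (Δ a))^[g] 1) =
      ∑ i, ((lam i ^ ((g : ℤ) - 1) : Rˣ) : R) :=
  closed_invariant_semisimple_general Δ μ hcounitL hfrob e b hb hid horth lam hμ g
end

section
/- The weighted count of degree-d covers of a closed genus-g surface, Z⁰_d(g) = the genus-g closed invariant of the Frobenius algebra Z(ℚ[S_d]) with counit μ(Σ a_g g) = a_Id/d!, equals Σ_R (d!/dim R)^{2g−2}, the sum over irreducible representations R of S_d. -/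
/-!
The Frobenius relation makes `Δ` left `A`-linear, `Δ a = (a ⊗ 1) Δ 1`, so the handle operator
`m ∘ Δ` is multiplication by the handle element `h = m (Δ 1)` and the closed invariant is
`μ (h ^ g)`. If `e` is idempotent with `e A = K e`, then `Δ e = Δ (e e)` lies in `e ⊗ A`, and the
counit law turns this into `μ e • e h = e`. Hence `h = ∑ μ (v_i)⁻¹ v_i` and
`μ (h ^ g) = ∑ μ (v_i) ^ (1 - g)`.
-/

open TensorProduct

namespace Module.Basis

variable {R A ι : Type*} [CommSemiring R] [CommSemiring A] [Algebra R A] [Fintype ι]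
  (b : Basis ι R A)

theorem mul_eq_repr_smul_of_orthogonal_idempotents (hid : ∀ i, b i * b i = b i)
    (horth : ∀ i j, i ≠ j → b i * b j = 0) (i : ι) (a : A) :
    b i * a = b.repr a i • b i := by
  classical
  conv_lhs => rw [← b.sum_repr a]
  rw [Finset.mul_sum, Finset.sum_eq_single i]
  · rw [mul_smul_comm, hid]
  · intro j _ hji
    rw [mul_smul_comm, horth i j hji.symm, smul_zero]
  · simp

theorem sum_mul_eq_of_orthogonal_idempotents (hid : ∀ i, b i * b i = b i)
    (horth : ∀ i j, i ≠ j → b i * b j = 0) (a : A) :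
    ∑ i, b i * a = a := by
  simp_rw [b.mul_eq_repr_smul_of_orthogonal_idempotents hid horth]
  exact b.sum_repr a

end Module.Basis

section Frobenius

variable {R A : Type*} [CommSemiring R] [CommSemiring A] [Algebra R A]

/-- `(a ⊗ 1) * t`, written as in the Frobenius relation. -/
abbrev leftMulTensor (a : A) (t : A ⊗[R] A) : A ⊗[R] A :=
  map (LinearMap.mul' R A) LinearMap.id ((TensorProduct.assoc R A A A).symm (a ⊗ₜ t))

theorem leftMulTensor_tmul (a x y : A) : leftMulTensor (R := R) a (x ⊗ₜ y) = (a * x) ⊗ₜ y := by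
  simp [leftMulTensor]

theorem mul'_leftMulTensor (a : A) (t : A ⊗[R] A) :
    LinearMap.mul' R A (leftMulTensor a t) = a * LinearMap.mul' R A t := by
  induction t using TensorProduct.induction_on with
  | zero => simp [leftMulTensor]
  | tmul x y => simp [leftMulTensor, mul_assoc]
  | add s t hs ht => simp_all [leftMulTensor, tmul_add, mul_add]

theorem exists_leftMulTensor_eq_tmul {e : A} (he : ∀ a, ∃ r : R, e * a = r • e)
    (t : A ⊗[R] A) : ∃ w, leftMulTensor e t = e ⊗ₜ w := by
  induction t using TensorProduct.induction_on with
  | zero => exact ⟨0, by simp [leftMulTensor]⟩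
  | tmul x y =>
    obtain ⟨r, hr⟩ := he x
    exact ⟨r • y, by rw [leftMulTensor_tmul, hr, smul_tmul]⟩
  | add s t hs ht =>
    obtain ⟨u, hu⟩ := hs
    obtain ⟨w, hw⟩ := ht
    refine ⟨u + w, ?_⟩
    simp_all [leftMulTensor, tmul_add]

variable (Δ : A →ₗ[R] A ⊗[R] A)

def handleElement : A := LinearMap.mul' R A (Δ 1)

theorem mul'_apply_eq_mul_handleElement (hfrob : ∀ a b, Δ (a * b) = leftMulTensor a (Δ b))
    (a : A) : LinearMap.mul' R A (Δ a) = a * handleElement Δ := by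
  rw [← mul_one a, hfrob, mul'_leftMulTensor, mul_one, handleElement]

theorem iterate_handle_one_eq_pow (hfrob : ∀ a b, Δ (a * b) = leftMulTensor a (Δ b)) (n : ℕ) :
    (fun a => LinearMap.mul' R A (Δ a))^[n] 1 = handleElement Δ ^ n := by
  induction n with
  | zero => rw [Function.iterate_zero_apply, pow_zero]
  | succ n ih =>
    rw [Function.iterate_succ_apply', ih, mul'_apply_eq_mul_handleElement Δ hfrob, pow_succ]

theorem counit_smul_mul'_apply_self (μ : A →ₗ[R] R)
    (hcounit : ∀ a, TensorProduct.lid R A (map μ LinearMap.id (Δ a)) = a)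
    (hfrob : ∀ a b, Δ (a * b) = leftMulTensor a (Δ b))
    {e : A} (he_idem : e * e = e) (he : ∀ a, ∃ r : R, e * a = r • e) :
    μ e • LinearMap.mul' R A (Δ e) = e := by
  obtain ⟨w, hw⟩ := exists_leftMulTensor_eq_tmul he (Δ e)
  have hΔe : Δ e = e ⊗ₜ w := by rw [← hw, ← hfrob, he_idem]
  have hcounit_e : μ e • w = e := by simpa [hΔe] using hcounit e
  calc μ e • LinearMap.mul' R A (Δ e) = e * (μ e • w) := by
        rw [hΔe, LinearMap.mul'_apply, mul_smul_comm]
    _ = e := by rw [hcounit_e, he_idem]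

end Frobenius

section IdempotentBasis

variable {K A ι : Type*} [Field K] [CommRing A] [Algebra K A] [Fintype ι]
  (Δ : A →ₗ[K] A ⊗[K] A) (μ : A →ₗ[K] K) (b : Module.Basis ι K A)

theorem counit_smul_basis_mul_handleElement
    (hcounit : ∀ a, TensorProduct.lid K A (map μ LinearMap.id (Δ a)) = a)
    (hfrob : ∀ a b, Δ (a * b) = leftMulTensor a (Δ b))
    (hid : ∀ i, b i * b i = b i) (horth : ∀ i j, i ≠ j → b i * b j = 0) (i : ι) :
    μ (b i) • (b i * handleElement Δ) = b i := by
  rw [← mul'_apply_eq_mul_handleElement Δ hfrob]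
  exact counit_smul_mul'_apply_self Δ μ hcounit hfrob (hid i)
    fun a => ⟨_, b.mul_eq_repr_smul_of_orthogonal_idempotents hid horth i a⟩

theorem counit_basis_ne_zero
    (hcounit : ∀ a, TensorProduct.lid K A (map μ LinearMap.id (Δ a)) = a)
    (hfrob : ∀ a b, Δ (a * b) = leftMulTensor a (Δ b))
    (hid : ∀ i, b i * b i = b i) (horth : ∀ i j, i ≠ j → b i * b j = 0) (i : ι) :
    μ (b i) ≠ 0 := fun h => b.ne_zero i <| by
  simpa [h] using (counit_smul_basis_mul_handleElement Δ μ b hcounit hfrob hid horth i).symm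

theorem basis_mul_handleElement
    (hcounit : ∀ a, TensorProduct.lid K A (map μ LinearMap.id (Δ a)) = a)
    (hfrob : ∀ a b, Δ (a * b) = leftMulTensor a (Δ b))
    (hid : ∀ i, b i * b i = b i) (horth : ∀ i j, i ≠ j → b i * b j = 0) (i : ι) :
    b i * handleElement Δ = (μ (b i))⁻¹ • b i :=
  Eq.symm <| (inv_smul_eq_iff₀ (counit_basis_ne_zero Δ μ b hcounit hfrob hid horth i)).mpr
    (counit_smul_basis_mul_handleElement Δ μ b hcounit hfrob hid horth i).symm

theorem closedInvariant_eq_sum_counit_zpow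
    (hcounit : ∀ a, TensorProduct.lid K A (map μ LinearMap.id (Δ a)) = a)
    (hfrob : ∀ a b, Δ (a * b) = leftMulTensor a (Δ b))
    (hid : ∀ i, b i * b i = b i) (horth : ∀ i j, i ≠ j → b i * b j = 0) (g : ℕ) :
    μ ((fun a => LinearMap.mul' K A (Δ a))^[g] 1) = ∑ i, μ (b i) ^ (1 - g : ℤ) := by
  have hpow (i : ι) (n : ℕ) : b i * handleElement Δ ^ n = (μ (b i))⁻¹ ^ n • b i := by
    induction n with
    | zero => rw [pow_zero, pow_zero, mul_one, one_smul]
    | succ n ih =>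
      rw [pow_succ, ← mul_assoc, ih, smul_mul_assoc,
        basis_mul_handleElement Δ μ b hcounit hfrob hid horth, smul_smul, pow_succ]
  rw [iterate_handle_one_eq_pow Δ hfrob,
    ← b.sum_mul_eq_of_orthogonal_idempotents hid horth (handleElement Δ ^ g), map_sum]
  refine Finset.sum_congr rfl fun i _ => ?_
  have hμ := counit_basis_ne_zero Δ μ b hcounit hfrob hid horth i
  rw [hpow, map_smul, smul_eq_mul, inv_pow, ← zpow_natCast, ← zpow_neg, ← zpow_add_one₀ hμ,
    neg_add_eq_sub]

end IdempotentBasis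

theorem hurwitz_closed_invariant_general
    {A : Type*} [CommRing A] [Algebra ℚ A]
    (d : ℕ)
    {ι : Type*} [Fintype ι]   -- indexes the irreducible representations of `S_d`
    (dimR : ι → ℕ)
    (Δ : A →ₗ[ℚ] A ⊗[ℚ] A) (μ : A →ₗ[ℚ] ℚ)
    (hcounitL : ∀ a : A, (TensorProduct.lid ℚ A) (TensorProduct.map μ LinearMap.id (Δ a)) = a)
    (hfrob : ∀ a b : A, Δ (a * b) = TensorProduct.map (LinearMap.mul' ℚ A) LinearMap.id
      ((TensorProduct.assoc ℚ A A A).symm (a ⊗ₜ[ℚ] Δ b)))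
    (v : ι → A) (b : Module.Basis ι ℚ A) (hb : ∀ i, b i = v i)
    (hid : ∀ i, v i * v i = v i)
    (horth : ∀ i j, i ≠ j → v i * v j = 0)
    (hμv : ∀ i, μ (v i) = ((dimR i : ℚ) / d.factorial) ^ 2)
    (g : ℕ) :
    μ ((fun a => LinearMap.mul' ℚ A (Δ a))^[g] 1) =
      ∑ i, ((d.factorial : ℚ) / dimR i) ^ (2 * (g : ℤ) - 2) := by
  obtain rfl : v = b := funext fun i => (hb i).symm
  rw [closedInvariant_eq_sum_counit_zpow Δ μ b hcounitL hfrob hid horth]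
  refine Finset.sum_congr rfl fun i _ => ?_
  rw [hμv, ← zpow_natCast, ← zpow_mul, ← inv_div, inv_zpow']
  congr 1
  ring

/-- **Counting unramified covers via representation theory.**
Let `A` be the Frobenius algebra `Z(ℚ[S_d])` (a commutative Frobenius `ℚ`-algebra
with counit `μ(∑ a_g g) = a_Id/d!`): it is semisimple with an orthogonal idempotent
basis `v_R` indexed by the irreducible representations `R` of `S_d`, satisfying
`μ(v_R) = (dim R/d!)²`.  Then the genus-`g` closed invariant — `μ(H^g(1))` for the
handle operator `H = m∘Δ` — equals `∑_R (d!/dim R)^{2g−2}`. -/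
theorem hurwitz_closed_invariant
    {A : Type*} [CommRing A] [Algebra ℚ A]
    (d : ℕ) (hd : 0 < d)
    {ι : Type*} [Fintype ι]   -- indexes the irreducible representations of `S_d`
    (dimR : ι → ℕ) (hdim : ∀ i, 0 < dimR i)
    (Δ : A →ₗ[ℚ] A ⊗[ℚ] A) (μ : A →ₗ[ℚ] ℚ)
    (hcounitR : ∀ a : A, (TensorProduct.rid ℚ A) (TensorProduct.map LinearMap.id μ (Δ a)) = a)
    (hcounitL : ∀ a : A, (TensorProduct.lid ℚ A) (TensorProduct.map μ LinearMap.id (Δ a)) = a)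
    (hfrob : ∀ a b : A, Δ (a * b) = TensorProduct.map (LinearMap.mul' ℚ A) LinearMap.id
      ((TensorProduct.assoc ℚ A A A).symm (a ⊗ₜ[ℚ] Δ b)))
    (v : ι → A) (b : Module.Basis ι ℚ A) (hb : ∀ i, b i = v i)
    (hid : ∀ i, v i * v i = v i)
    (horth : ∀ i j, i ≠ j → v i * v j = 0)
    (hμv : ∀ i, μ (v i) = ((dimR i : ℚ) / d.factorial) ^ 2)
    (g : ℕ) :
    μ ((fun a => LinearMap.mul' ℚ A (Δ a))^[g] 1) =
      ∑ i, ((d.factorial : ℚ) / dimR i) ^ (2 * (g : ℤ) - 2) :=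
  hurwitz_closed_invariant_general d dimR Δ μ hcounitL hfrob v b hb hid horth hμv g
end
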